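/- For all μ, ν, λ ∈ {0,1,2,3} the product of three Dirac matrices reduces as γ_μ γ_ν γ_λ = g_{μν} γ_λ + g_{νλ} γ_μ − g_{λμ} γ_ν − i ε_{μνλρ} γ^ρ γ_5, where the sum runs over ρ from 0 to 3. -/

import Mathlib

/-!
Since `g` is diagonal with `g_{μμ}² = 1`, the lowered matrices `e_μ = γ_μ = g_{μμ} γ^μ` obey the
same anticommutation relations as the `γ^μ`, and `γ^ρ γ_5 = -i g_{ρρ} e_ρ e_0 e_1 e_2 e_3`.
If two of `μ, ν, λ` coincide, `ε_{μνλρ}` vanishes and the identity follows from `e_μ² = g_{μμ}`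
and anticommutation. If they are distinct, every `g`-term vanishes; for the one remaining index
`ρ` we have `e_0 e_1 e_2 e_3 = ε_{μνλρ} e_μ e_ν e_λ e_ρ`, and moving `e_ρ` across the three other
factors gives `e_ρ e_0 e_1 e_2 e_3 = -ε_{μνλρ} g_{ρρ} e_μ e_ν e_λ`.
-/

open Matrix

/-- The Minkowski metric `g = diag(+1, -1, -1, -1)` (as complex numbers). -/
noncomputable def minkowski (μ ν : Fin 4) : ℂ :=
  if μ = ν then (if μ = 0 then 1 else -1) else 0

/-- A family `γ^0, γ^1, γ^2, γ^3` of 4×4 complex matrices is a set of Dirac matrices if it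
satisfies the anticommutation relations `γ^μ γ^ν + γ^ν γ^μ = 2 g^{μν} I` and the hermiticity
condition `(γ^μ)† = γ^0 γ^μ γ^0`. -/
def IsDiracFamily (γ : Fin 4 → Matrix (Fin 4) (Fin 4) ℂ) : Prop :=
  (∀ μ ν, γ μ * γ ν + γ ν * γ μ = (2 * minkowski μ ν) • (1 : Matrix (Fin 4) (Fin 4) ℂ)) ∧
  (∀ μ, (γ μ)ᴴ = γ 0 * γ μ * γ 0)

/-- The gamma matrices with lowered index: `γ_μ = g_{μν} γ^ν` (sum over `ν`). -/
noncomputable def lowerGamma (γ : Fin 4 → Matrix (Fin 4) (Fin 4) ℂ) (μ : Fin 4) :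
    Matrix (Fin 4) (Fin 4) ℂ :=
  ∑ ν, minkowski μ ν • γ ν

/-- The sigma matrices `σ^{μν} = (i/2)(γ^μ γ^ν - γ^ν γ^μ)`. -/
noncomputable def sigmaUp (γ : Fin 4 → Matrix (Fin 4) (Fin 4) ℂ) (μ ν : Fin 4) :
    Matrix (Fin 4) (Fin 4) ℂ :=
  (Complex.I / 2) • (γ μ * γ ν - γ ν * γ μ)

/-- The sigma matrices with both indices lowered: `σ_{μν} = g_{μα} g_{νβ} σ^{αβ}`. -/
noncomputable def sigmaLow (γ : Fin 4 → Matrix (Fin 4) (Fin 4) ℂ) (μ ν : Fin 4) :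
    Matrix (Fin 4) (Fin 4) ℂ :=
  ∑ α, ∑ β, (minkowski μ α * minkowski ν β) • sigmaUp γ α β

/-- `γ_5 = i γ^0 γ^1 γ^2 γ^3`. -/
noncomputable def gammaFive (γ : Fin 4 → Matrix (Fin 4) (Fin 4) ℂ) :
    Matrix (Fin 4) (Fin 4) ℂ :=
  Complex.I • (γ 0 * γ 1 * γ 2 * γ 3)

/-- Sign of an integer, valued in `ℤ`. -/
def intSgn (x : ℤ) : ℤ := if 0 < x then 1 else if x < 0 then -1 else 0

/-- The rank-4 Levi-Civita symbol `ε_{abcd}` (lower indices), totally antisymmetric with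
`ε_{0123} = +1`. -/
def levi (a b c d : Fin 4) : ℤ :=
  intSgn ((b.val : ℤ) - a.val) * intSgn ((c.val : ℤ) - a.val) * intSgn ((d.val : ℤ) - a.val) *
  intSgn ((c.val : ℤ) - b.val) * intSgn ((d.val : ℤ) - b.val) * intSgn ((d.val : ℤ) - c.val)

/-- The Levi-Civita symbol with all four indices raised by the Minkowski metric:
`ε^{μνλρ} = g^{μα} g^{νβ} g^{λγ} g^{ρδ} ε_{αβγδ}` (so `ε^{0123} = -1`). -/
noncomputable def leviUp (μ ν lam ρ : Fin 4) : ℂ :=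
  ∑ α, ∑ β, ∑ c, ∑ d,
    minkowski μ α * minkowski ν β * minkowski lam c * minkowski ρ d * ((levi α β c d : ℤ) : ℂ)

theorem minkowski_comm (μ ν : Fin 4) : minkowski μ ν = minkowski ν μ := by
  unfold minkowski; split_ifs <;> simp_all

theorem minkowski_of_ne {μ ν : Fin 4} (h : μ ≠ ν) : minkowski μ ν = 0 := if_neg h

theorem minkowski_self_mul_self (μ : Fin 4) : minkowski μ μ * minkowski μ μ = 1 := by
  simp only [minkowski, if_true]; split_ifs <;> norm_num

theorem pairwise_ne_of_levi_ne_zero {a b c d : Fin 4} :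
    levi a b c d ≠ 0 → a ≠ b ∧ a ≠ c ∧ a ≠ d ∧ b ≠ c ∧ b ≠ d ∧ c ≠ d := by
  revert a b c d; decide

theorem sum_levi_sq {a b c : Fin 4} :
    a ≠ b → a ≠ c → b ≠ c → ∑ d, levi a b c d ^ 2 = 1 := by
  simp only [Fin.sum_univ_four]; revert a b c; decide

section MinkowskiClifford

variable {A : Type*} [Ring A] [Algebra ℂ A] {e : Fin 4 → A}
  (he : ∀ μ ν, e μ * e ν + e ν * e μ = (2 * minkowski μ ν) • (1 : A))
include he

theorem mul_self_of_anticomm (μ : Fin 4) : e μ * e μ = minkowski μ μ • 1 := by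
  have h := he μ μ
  rw [← two_smul ℂ, mul_smul] at h
  exact smul_right_injective A two_ne_zero h

theorem mul_comm_neg_of_anticomm {μ ν : Fin 4} (h : μ ≠ ν) : e μ * e ν = -(e ν * e μ) := by
  rw [eq_neg_iff_add_eq_zero, he, minkowski_of_ne h, mul_zero, zero_smul]

theorem mul_left_comm_neg_of_anticomm {μ ν : Fin 4} (h : μ ≠ ν) (x : A) :
    e μ * (e ν * x) = -(e ν * (e μ * x)) := by
  rw [← mul_assoc, mul_comm_neg_of_anticomm he h, neg_mul, mul_assoc]

theorem volume_eq_levi_smul {a b c d : Fin 4} (h : levi a b c d ≠ 0) :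
    e 0 * e 1 * e 2 * e 3 = (levi a b c d : ℂ) • (e a * e b * e c * e d) := by
  have swap {μ ν : Fin 4} (h : ν < μ) := mul_comm_neg_of_anticomm he h.ne'
  have swap_left {μ ν : Fin 4} (h : ν < μ) := mul_left_comm_neg_of_anticomm he h.ne'
  -- `simp` bubble-sorts the product `e a * e b * e c * e d` into increasing order
  fin_cases a <;> fin_cases b <;> fin_cases c <;> fin_cases d <;>
    simp +decide [levi, intSgn, mul_assoc, swap, swap_left] at h ⊢

theorem mul_triple_mul_self_of_ne {ρ μ ν lam : Fin 4} (hμ : ρ ≠ μ) (hν : ρ ≠ ν) (hlam : ρ ≠ lam) :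
    e ρ * (e μ * e ν * e lam * e ρ) = -minkowski ρ ρ • (e μ * e ν * e lam) := by
  simp only [mul_assoc, mul_left_comm_neg_of_anticomm he hμ, mul_left_comm_neg_of_anticomm he hν,
    mul_left_comm_neg_of_anticomm he hlam, mul_neg, neg_neg, mul_self_of_anticomm he, mul_smul_comm,
    mul_one, neg_smul]

theorem mul_mul_eq_neg_sum_levi_of_pairwise_ne {μ ν lam : Fin 4} (hμν : μ ≠ ν) (hμlam : μ ≠ lam)
    (hνlam : ν ≠ lam) :
    e μ * e ν * e lam =
      -∑ ρ, ((levi μ ν lam ρ : ℂ) * minkowski ρ ρ) • (e ρ * (e 0 * e 1 * e 2 * e 3)) := by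
  have term (ρ : Fin 4) : ((levi μ ν lam ρ : ℂ) * minkowski ρ ρ) • (e ρ * (e 0 * e 1 * e 2 * e 3))
      = -((levi μ ν lam ρ ^ 2 : ℤ) : ℂ) • (e μ * e ν * e lam) := by
    by_cases hl : levi μ ν lam ρ = 0
    · simp [hl]
    obtain ⟨-, -, hμρ, -, hνρ, hlamρ⟩ := pairwise_ne_of_levi_ne_zero hl
    rw [volume_eq_levi_smul he hl, mul_smul_comm, smul_smul,
      mul_triple_mul_self_of_ne he hμρ.symm hνρ.symm hlamρ.symm, smul_smul]
    congr 1
    push_cast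
    linear_combination -(levi μ ν lam ρ : ℂ) ^ 2 * minkowski_self_mul_self ρ
  simp only [term, neg_smul, Finset.sum_neg_distrib, neg_neg, ← Finset.sum_smul, ← Int.cast_sum,
    sum_levi_sq hμν hμlam hνlam, Int.cast_one, one_smul]

theorem mul_mul_eq_of_anticomm (μ ν lam : Fin 4) :
    e μ * e ν * e lam =
      minkowski μ ν • e lam + minkowski ν lam • e μ - minkowski lam μ • e ν
        - ∑ ρ, ((levi μ ν lam ρ : ℂ) * minkowski ρ ρ) • (e ρ * (e 0 * e 1 * e 2 * e 3)) := by
  by_cases hμν : μ = ν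
  · subst hμν
    have hl (ρ : Fin 4) : levi μ μ lam ρ = 0 := by
      by_contra h; exact (pairwise_ne_of_levi_ne_zero h).1 rfl
    simp [hl, mul_self_of_anticomm he, minkowski_comm lam μ]
  by_cases hνlam : ν = lam
  · subst hνlam
    have hl (ρ : Fin 4) : levi μ ν ν ρ = 0 := by
      by_contra h; exact (pairwise_ne_of_levi_ne_zero h).2.2.2.1 rfl
    simp [hl, mul_assoc, mul_self_of_anticomm he, minkowski_comm ν μ]
  by_cases hlamμ : lam = μ
  · subst hlamμ
    have hl (ρ : Fin 4) : levi lam ν lam ρ = 0 := by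
      by_contra h; exact (pairwise_ne_of_levi_ne_zero h).2.1 rfl
    have hνlam' : e ν * e lam = (2 * minkowski ν lam) • 1 - e lam * e ν :=
      eq_sub_of_add_eq (he ν lam)
    simp only [hl, Int.cast_zero, zero_mul, zero_smul, Finset.sum_const_zero, sub_zero]
    rw [mul_assoc, hνlam', mul_sub, mul_smul_comm, mul_one, ← mul_assoc, mul_self_of_anticomm he,
      smul_mul_assoc, one_mul, minkowski_comm ν lam, two_mul, add_smul]
  rw [minkowski_of_ne hμν, minkowski_of_ne hνlam, minkowski_of_ne hlamμ]
  simpa using mul_mul_eq_neg_sum_levi_of_pairwise_ne he hμν (Ne.symm hlamμ) hνlam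

end MinkowskiClifford

section DiracMatrices

variable (γ : Fin 4 → Matrix (Fin 4) (Fin 4) ℂ)

theorem lowerGamma_eq_smul (μ : Fin 4) : lowerGamma γ μ = minkowski μ μ • γ μ :=
  Finset.sum_eq_single μ (fun ν _ h => by rw [minkowski_of_ne h.symm, zero_smul])
    (fun h => absurd (Finset.mem_univ μ) h)

theorem gamma_eq_smul_lowerGamma (μ : Fin 4) : γ μ = minkowski μ μ • lowerGamma γ μ := by
  rw [lowerGamma_eq_smul, smul_smul, minkowski_self_mul_self, one_smul]

theorem gammaFive_eq_smul_lowerGamma :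
    gammaFive γ =
      -Complex.I • (lowerGamma γ 0 * lowerGamma γ 1 * lowerGamma γ 2 * lowerGamma γ 3) := by
  simp [gammaFive, lowerGamma_eq_smul, minkowski]

variable {γ}

theorem lowerGamma_anticomm (hγ : IsDiracFamily γ) (μ ν : Fin 4) :
    lowerGamma γ μ * lowerGamma γ ν + lowerGamma γ ν * lowerGamma γ μ =
      (2 * minkowski μ ν) • 1 := by
  rw [lowerGamma_eq_smul, lowerGamma_eq_smul, smul_mul_smul, smul_mul_smul, mul_comm (minkowski ν ν),
    ← smul_add, hγ.1, smul_smul]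
  congr 1
  by_cases h : μ = ν
  · subst h; linear_combination 2 * minkowski μ μ * minkowski_self_mul_self μ
  · simp [minkowski_of_ne h]

end DiracMatrices

/-- The reduction of a product of three gamma matrices:
`γ_μ γ_ν γ_λ = g_{μν} γ_λ + g_{νλ} γ_μ - g_{λμ} γ_ν - i ε_{μνλρ} γ^ρ γ_5` (sum over `ρ`). -/
theorem three_gamma_reduction (γ : Fin 4 → Matrix (Fin 4) (Fin 4) ℂ)
    (hγ : IsDiracFamily γ) :
    ∀ μ ν lam,
      lowerGamma γ μ * lowerGamma γ ν * lowerGamma γ lam =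
        minkowski μ ν • lowerGamma γ lam + minkowski ν lam • lowerGamma γ μ
          - minkowski lam μ • lowerGamma γ ν
          - Complex.I • ∑ ρ, ((levi μ ν lam ρ : ℤ) : ℂ) • (γ ρ * gammaFive γ) := by
  intro μ ν lam
  rw [mul_mul_eq_of_anticomm (lowerGamma_anticomm hγ), Finset.smul_sum]
  congr 1
  refine Finset.sum_congr rfl fun ρ _ => ?_
  rw [gamma_eq_smul_lowerGamma γ ρ, gammaFive_eq_smul_lowerGamma, smul_mul_smul, smul_smul,
    smul_smul]
  congr 1
  linear_combination (levi μ ν lam ρ : ℂ) * minkowski ρ ρ * Complex.I_mul_I
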